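/- Let y : [0,T] → ℝ be nonnegative and differentiable with y'(t) ≤ a + b·y(t)³ for constants a, b ≥ 0. If a·T + b·∫₀ᵀ y(s) ds + arctan(y(0)) < π/2, then for all t ∈ [0,T], y(t) ≤ tan(a·T + b·∫₀ᵀ y(s) ds + arctan(y(0))), so y does not blow up on [0,T]. -/

import Mathlib

open Real MeasureTheory intervalIntegral

/-!
Since `y ≥ 0`, `(arctan y)' = y' / (1 + y²) ≤ (a + b y³) / (1 + y²) ≤ a + b y`. Integrating,
`arctan (y t) ≤ arctan (y 0) + a t + b ∫₀ᵗ y`, which is at most the quantity assumed to be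
below `π / 2`; apply the increasing function `tan`.
-/

theorem le_tan_of_arctan_le {x c : ℝ} (h : arctan x ≤ c) (hc : c < π / 2) : x ≤ tan c := by
  have hc_mem : c ∈ Set.Ioo (-(π / 2)) (π / 2) := ⟨(arctan_mem_Ioo x).1.trans_le h, hc⟩
  simpa only [tan_arctan] using strictMonoOn_tan.monotoneOn (arctan_mem_Ioo x) hc_mem h

theorem div_one_add_sq_le_add_mul {a b x d : ℝ} (ha : 0 ≤ a) (hb : 0 ≤ b) (hx : 0 ≤ x)
    (hd : d ≤ a + b * x ^ 3) : d / (1 + x ^ 2) ≤ a + b * x := by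
  rw [div_le_iff₀ (by positivity)]
  nlinarith [mul_nonneg ha (sq_nonneg x), mul_nonneg hb hx]

theorem arctan_sub_arctan_le_of_deriv_le {a b u v : ℝ} {y y' : ℝ → ℝ} (ha : 0 ≤ a) (hb : 0 ≤ b)
    (huv : u ≤ v) (hderiv : ∀ t ∈ Set.Icc u v, HasDerivAt y (y' t) t)
    (hnonneg : ∀ t ∈ Set.Icc u v, 0 ≤ y t) (hineq : ∀ t ∈ Set.Icc u v, y' t ≤ a + b * y t ^ 3) :
    arctan (y v) - arctan (y u) ≤ a * (v - u) + b * ∫ s in u..v, y s := by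
  have hcont : ContinuousOn y (Set.Icc u v) := fun t ht ↦
    (hderiv t ht).continuousAt.continuousWithinAt
  have hint : IntervalIntegrable y volume u v := hcont.intervalIntegrable_of_Icc huv
  have key : arctan (y v) - arctan (y u) ≤ ∫ s in u..v, (a + b * y s) := by
    refine sub_le_integral_of_hasDeriv_right_of_le huv (continuous_arctan.comp_continuousOn hcont)
      (fun t ht ↦ ((hderiv t (Set.Ioo_subset_Icc_self ht)).arctan).hasDerivWithinAt)
      ((continuousOn_const.add (continuousOn_const.mul hcont)).integrableOn_Icc) fun t ht ↦ ?_
    have ht' := Set.Ioo_subset_Icc_self ht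
    simpa only [one_div_mul_eq_div] using
      div_one_add_sq_le_add_mul ha hb (hnonneg t ht') (hineq t ht')
  rwa [integral_add intervalIntegrable_const (hint.const_mul b),
    intervalIntegral.integral_const_mul, intervalIntegral.integral_const, smul_eq_mul, mul_comm (v - u)] at key

theorem no_blowup_of_arctan_smallness_general (T a b : ℝ) (ha : 0 ≤ a) (hb : 0 ≤ b)
    (y y' : ℝ → ℝ)
    (hderiv : ∀ t ∈ Set.Icc (0:ℝ) T, HasDerivAt y (y' t) t)
    (hnonneg : ∀ t ∈ Set.Icc (0:ℝ) T, 0 ≤ y t)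
    (hineq : ∀ t ∈ Set.Icc (0:ℝ) T, y' t ≤ a + b * (y t) ^ 3)
    (hsmall : a * T + b * (∫ s in (0:ℝ)..T, y s) + Real.arctan (y 0) < Real.pi / 2) :
    ∀ t ∈ Set.Icc (0:ℝ) T,
      y t ≤ Real.tan (a * T + b * (∫ s in (0:ℝ)..T, y s) + Real.arctan (y 0)) := by
  rintro t ⟨ht0, htT⟩
  have hsub : Set.Icc 0 t ⊆ Set.Icc 0 T := Set.Icc_subset_Icc_right htT
  have hgrowth := arctan_sub_arctan_le_of_deriv_le ha hb ht0 (fun s hs ↦ hderiv s (hsub hs))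
    (fun s hs ↦ hnonneg s (hsub hs)) (fun s hs ↦ hineq s (hsub hs))
  have hint : IntervalIntegrable y volume 0 T :=
    ContinuousOn.intervalIntegrable_of_Icc (ht0.trans htT) fun s hs ↦
      (hderiv s hs).continuousAt.continuousWithinAt
  have hmono : ∫ s in (0:ℝ)..t, y s ≤ ∫ s in (0:ℝ)..T, y s :=
    integral_mono_interval le_rfl ht0 htT
      ((ae_restrict_iff' measurableSet_Ioc).2 (.of_forall fun s hs ↦
        hnonneg s (Set.Ioc_subset_Icc_self hs))) hint
  refine le_tan_of_arctan_le ?_ hsmall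
  linarith [mul_le_mul_of_nonneg_left htT ha, mul_le_mul_of_nonneg_left hmono hb]

theorem no_blowup_of_arctan_smallness (T a b : ℝ) (hT : 0 < T) (ha : 0 ≤ a) (hb : 0 ≤ b)
    (y y' : ℝ → ℝ)
    (hderiv : ∀ t ∈ Set.Icc (0:ℝ) T, HasDerivAt y (y' t) t)
    (hnonneg : ∀ t ∈ Set.Icc (0:ℝ) T, 0 ≤ y t)
    (hineq : ∀ t ∈ Set.Icc (0:ℝ) T, y' t ≤ a + b * (y t) ^ 3)
    (hint : IntervalIntegrable y volume 0 T)
    (hsmall : a * T + b * (∫ s in (0:ℝ)..T, y s) + Real.arctan (y 0) < Real.pi / 2) :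
    ∀ t ∈ Set.Icc (0:ℝ) T,
      y t ≤ Real.tan (a * T + b * (∫ s in (0:ℝ)..T, y s) + Real.arctan (y 0)) :=
  no_blowup_of_arctan_smallness_general T a b ha hb y y' hderiv hnonneg hineq hsmall
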